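/- Let f(z) = λ·e^z with λ ∈ ℂ \ {0} be a hyperbolic exponential function (having an attracting periodic cycle), and suppose the forward orbit of 0 stays at positive distance from the Julia set J_f. Then a point z ∈ J_f is radial (there exists δ > 0 such that for infinitely many n, f^n admits an analytic inverse branch on B(f^n(z), δ) sending f^n(z) to z) if and only if the sequence (f^n(z))_{n≥1} does not converge to ∞. -/

import Mathlib

/-!
If `|fⁿ(z)|` does not tend to `∞`, infinitely many `fⁿ(z)` lie in a fixed disc, where chordal
balls of a fixed radius sit inside Euclidean balls of radius `ε / 2`; these avoid the orbit of
`0`, so on them the inverse branch of `fⁿ` is built by taking `n` successive holomorphic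
logarithms, each of a branch that omits `0`.
Conversely, if `|fⁿ(z)| → ∞`, the chordal ball of fixed radius about `fⁿ(z)` eventually contains
`{w | |fⁿ(z)| < |w|}`. An inverse branch `g` of `fⁿ` there makes `fⁿ⁻¹ ∘ g + log λ` a
holomorphic logarithm of `w` around a circle centred at `0`, contradicting `∮ dw / w = 2πi`.
-/

open Filter

/-- The chordal (spherical) distance between two points of `ℂ ⊆ Ĉ`. -/
noncomputable def chordalDist (z w : ℂ) : ℝ :=
  2 * ‖z - w‖ /
    (Real.sqrt (1 + ‖z‖ ^ 2) * Real.sqrt (1 + ‖w‖ ^ 2))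

/-- `z` is a radial point for `f`: there is `δ > 0` such that for infinitely many `n`, the
iterate `fⁿ` admits an analytic inverse branch on the spherical ball `B_sph(fⁿ(z), δ)`
sending `fⁿ(z)` back to `z`. -/
def IsRadialPoint (f : ℂ → ℂ) (z : ℂ) : Prop :=
  ∃ δ > (0 : ℝ), ∀ N : ℕ, ∃ n ≥ N, ∃ g : ℂ → ℂ,
    AnalyticOnNhd ℂ g {w | chordalDist (f^[n] z) w < δ} ∧
    g (f^[n] z) = z ∧
    ∀ w, chordalDist (f^[n] z) w < δ → f^[n] (g w) = w

open Complex Metric Set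

lemma one_le_sqrt_one_add_sq (x : ℝ) : 1 ≤ Real.sqrt (1 + x ^ 2) :=
  Real.one_le_sqrt.2 (by nlinarith)

lemma sqrt_one_add_sq_le {x : ℝ} (hx : 0 ≤ x) : Real.sqrt (1 + x ^ 2) ≤ 1 + x :=
  Real.sqrt_le_iff.2 ⟨by linarith, by nlinarith⟩

lemma chordalDist_le_two_mul_norm_sub (z w : ℂ) : chordalDist z w ≤ 2 * ‖z - w‖ := by
  have hD : 1 ≤ Real.sqrt (1 + ‖z‖ ^ 2) * Real.sqrt (1 + ‖w‖ ^ 2) :=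
    one_le_mul_of_one_le_of_one_le (one_le_sqrt_one_add_sq _) (one_le_sqrt_one_add_sq _)
  exact div_le_self (by positivity) hD

lemma norm_sub_lt_of_chordalDist_lt {a w : ℂ} {K δ : ℝ} (hK : 1 + ‖a‖ ≤ K) (hδK : δ * K ≤ 1)
    (h : chordalDist a w < δ) : ‖a - w‖ < δ * K ^ 2 := by
  have hw : ‖w‖ ≤ ‖a‖ + ‖a - w‖ := by
    simpa [norm_sub_rev] using norm_le_norm_add_norm_sub' w a
  have hsa := sqrt_one_add_sq_le (norm_nonneg a)
  have hsw := sqrt_one_add_sq_le (norm_nonneg w)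
  have hD : Real.sqrt (1 + ‖a‖ ^ 2) * Real.sqrt (1 + ‖w‖ ^ 2) ≤ K * (K + ‖a - w‖) :=
    mul_le_mul (hsa.trans hK) (by linarith) (Real.sqrt_nonneg _) (by linarith [norm_nonneg a])
  have hδ : 0 ≤ δ := (div_nonneg (by positivity) (by positivity)).trans h.le
  have h2 : 2 * ‖a - w‖ < δ * (Real.sqrt (1 + ‖a‖ ^ 2) * Real.sqrt (1 + ‖w‖ ^ 2)) :=
    (div_lt_iff₀ (by positivity)).1 h
  nlinarith [mul_le_mul_of_nonneg_left hD hδ, norm_nonneg (a - w)]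

lemma chordalDist_lt_of_norm_le {a w : ℂ} {δ : ℝ} (ha : 4 < δ * ‖a‖) (hw : ‖a‖ ≤ ‖w‖) :
    chordalDist a w < δ := by
  have hpos : 0 < δ * ‖a‖ := by linarith
  have hδ : 0 < δ := pos_of_mul_pos_left hpos (norm_nonneg a)
  have ha0 : 0 < ‖a‖ := pos_of_mul_pos_right hpos hδ.le
  have hsa : ‖a‖ ≤ Real.sqrt (1 + ‖a‖ ^ 2) := Real.le_sqrt_of_sq_le (by linarith)
  have hsw : ‖w‖ ≤ Real.sqrt (1 + ‖w‖ ^ 2) := Real.le_sqrt_of_sq_le (by linarith)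
  have hD : ‖a‖ * ‖w‖ ≤ Real.sqrt (1 + ‖a‖ ^ 2) * Real.sqrt (1 + ‖w‖ ^ 2) :=
    mul_le_mul hsa hsw (norm_nonneg w) (Real.sqrt_nonneg _)
  rw [chordalDist, div_lt_iff₀ (by positivity)]
  calc 2 * ‖a - w‖ ≤ 4 * ‖w‖ := by linarith [norm_sub_le a w]
    _ < δ * ‖a‖ * ‖w‖ := by gcongr; linarith
    _ ≤ _ := by rw [mul_assoc]; gcongr

lemma exists_log_on_ball {φ : ℂ → ℂ} {c : ℂ} {r : ℝ} (hr : 0 < r)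
    (hφ : DifferentiableOn ℂ φ (ball c r)) (hφ0 : ∀ w ∈ ball c r, φ w ≠ 0)
    {t : ℂ} (ht : exp t = φ c) :
    ∃ F : ℂ → ℂ, DifferentiableOn ℂ F (ball c r) ∧ F c = t ∧
      ∀ w ∈ ball c r, exp (F w) = φ w := by
  have hlog : DifferentiableOn ℂ (logDeriv φ) (ball c r) :=
    ((hφ.analyticOnNhd isOpen_ball).deriv.differentiableOn).div hφ hφ0
  obtain ⟨F, hFc, hF⟩ := hlog.isExactOn_ball.with_val_at c t
  have hFd : DifferentiableOn ℂ F (ball c r) := fun w hw =>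
    (hF w hw).differentiableAt.differentiableWithinAt
  have hexp : DifferentiableOn ℂ (exp ∘ F) (ball c r) :=
    differentiable_exp.comp_differentiableOn hFd
  have hlogexp : EqOn (logDeriv φ) (logDeriv (exp ∘ F)) (ball c r) := fun w hw => by
    rw [logDeriv_comp differentiableAt_exp (hF w hw).differentiableAt, (hF w hw).deriv,
      logDeriv_apply cexp, Complex.deriv_exp, div_self (exp_ne_zero _), one_mul]
  obtain ⟨k, -, hk⟩ := (logDeriv_eqOn_iff hφ hexp isOpen_ball (convex_ball c r).isPreconnected
    (fun w _ => exp_ne_zero _) hφ0).1 hlogexp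
  have hk1 : k = 1 := by
    have := hk (mem_ball_self hr)
    simp only [Pi.smul_apply, Function.comp_apply, hFc, ht, smul_eq_mul] at this
    exact (mul_eq_right₀ (hφ0 c (mem_ball_self hr))).1 this.symm
  refine ⟨F, hFd, hFc, fun w hw => ?_⟩
  simpa [hk1] using (hk hw).symm

lemma exists_inverse_branch_iterate {lam : ℂ} (hlam : lam ≠ 0) {f : ℂ → ℂ}
    (hf : f = fun w => lam * exp w) {a : ℂ} {r : ℝ} (hr : 0 < r) :
    ∀ (n : ℕ) {x : ℂ}, f^[n] x = a → (∀ j < n, f^[j] 0 ∉ ball a r) →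
      ∃ g : ℂ → ℂ, DifferentiableOn ℂ g (ball a r) ∧ g a = x ∧
        ∀ w ∈ ball a r, f^[n] (g w) = w
  | 0, x, hx, _ => ⟨id, differentiableOn_id, hx.symm, fun _ _ => rfl⟩
  | n + 1, x, hx, horb => by
    obtain ⟨g, hgd, hga, hg⟩ := exists_inverse_branch_iterate hlam hf hr n hx
      (fun j hj => horb j (Nat.lt_succ_of_lt hj))
    have hg0 : ∀ w ∈ ball a r, g w / lam ≠ 0 := fun w hw h0 => by
      rw [div_eq_zero_iff, or_iff_left hlam] at h0
      have hw' := hg w hw ▸ hw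
      rw [h0] at hw'
      exact horb n (Nat.lt_succ_self n) hw'
    obtain ⟨F, hFd, hFa, hF⟩ := exists_log_on_ball hr (hgd.div_const lam) hg0
      (t := x) (by rw [hga, hf, mul_div_cancel_left₀ _ hlam])
    refine ⟨F, hFd, hFa, fun w hw => ?_⟩
    have hfF : f (F w) = g w := by
      rw [hf]
      dsimp only
      rw [hF w hw, mul_div_cancel₀ _ hlam]
    rw [Function.iterate_succ_apply, hfF, hg w hw]

lemma not_exists_log_near_sphere {U : Set ℂ} (hU : IsOpen U) {R : ℝ} (hR : 0 < R)
    (hRU : sphere (0 : ℂ) R ⊆ U) {L : ℂ → ℂ} (hL : DifferentiableOn ℂ L U)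
    (hexp : ∀ w ∈ U, exp (L w) = w) : False := by
  have hderiv : ∀ w ∈ U, HasDerivAt L w⁻¹ w := fun w hw => by
    have hLw := (hL.differentiableAt (hU.mem_nhds hw)).hasDerivAt
    have hid : HasDerivAt (exp ∘ L) 1 w :=
      (hasDerivAt_id w).congr_of_eventuallyEq
        (Filter.eventually_of_mem (hU.mem_nhds hw) hexp)
    have h1 := hLw.cexp.unique hid
    rw [hexp w hw] at h1
    rwa [eq_inv_of_mul_eq_one_right h1] at hLw
  have h0 := circleIntegral.integral_eq_zero_of_hasDerivWithinAt hR.le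
    (fun w hw => (hderiv w (hRU hw)).hasDerivWithinAt)
  have h2pi := circleIntegral.integral_sub_inv_of_mem_ball (mem_ball_self (x := (0 : ℂ)) hR)
  simp only [sub_zero] at h2pi
  exact two_pi_I_ne_zero (h2pi.symm.trans h0)

lemma not_isRadialPoint_of_tendsto {lam : ℂ} (hlam : lam ≠ 0) {f : ℂ → ℂ}
    (hf : f = fun w => lam * exp w) {z : ℂ}
    (hesc : Tendsto (fun n => ‖f^[n] z‖) atTop atTop) : ¬ IsRadialPoint f z := by
  rintro ⟨δ, hδ, hbr⟩
  obtain ⟨N, hN⟩ := tendsto_atTop_atTop.1 hesc (5 / δ)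
  obtain ⟨n, hn, g, hga, -, hg⟩ := hbr (N + 1)
  set a := f^[n] z
  have ha : 4 < δ * ‖a‖ := by
    have := (div_le_iff₀' hδ).1 (hN n (by omega))
    linarith
  have ha0 : 0 < ‖a‖ := pos_of_mul_pos_right (by linarith) hδ.le
  have hU : {w | ‖a‖ < ‖w‖} ⊆ {w | chordalDist a w < δ} := fun w hw =>
    chordalDist_lt_of_norm_le ha (le_of_lt hw)
  have hfd : Differentiable ℂ f := hf ▸ (differentiable_const lam).mul differentiable_exp
  obtain ⟨m, rfl⟩ : ∃ m, n = m + 1 := ⟨n - 1, by omega⟩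
  refine not_exists_log_near_sphere (U := {w | ‖a‖ < ‖w‖})
    (isOpen_lt continuous_const continuous_norm) (mul_pos two_pos ha0) (fun w hw => ?_)
    (L := fun w => f^[m] (g w) + log lam) ?_ ?_
  · rw [mem_sphere_zero_iff_norm] at hw
    show ‖a‖ < ‖w‖
    linarith
  · exact ((hfd.iterate m).comp_differentiableOn
      ((hga.mono hU).differentiableOn)).add_const _
  · intro w hw
    calc exp (f^[m] (g w) + log lam) = f (f^[m] (g w)) := by
          rw [exp_add, exp_log hlam, mul_comm, hf]
      _ = w := by rw [← Function.iterate_succ_apply' f m]; exact hg w (hU hw)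

lemma isRadialPoint_of_frequently_norm_le {lam : ℂ} (hlam : lam ≠ 0) {f : ℂ → ℂ}
    (hf : f = fun w => lam * exp w) {z : ℂ} {M r : ℝ} (hr : 0 < r)
    (hM : ∃ᶠ n in atTop, ‖f^[n] z‖ ≤ M) (havoid : ∀ n j, f^[j] 0 ∉ ball (f^[n] z) r) :
    IsRadialPoint f z := by
  obtain ⟨n₀, hn₀⟩ := hM.exists
  set K := 1 + M
  have hK : 1 ≤ K := by linarith [norm_nonneg (f^[n₀] z)]
  set r' := min r 1
  have hr' : 0 < r' := lt_min hr one_pos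
  have hδK : r' / K ^ 2 * K ≤ 1 := by
    rw [sq, div_mul_eq_mul_div, mul_div_mul_right _ _ (by positivity)]
    exact div_le_one_of_le₀ ((min_le_right _ _).trans hK) (by positivity)
  refine ⟨r' / K ^ 2, by positivity, fun N => ?_⟩
  obtain ⟨n, hn, hnM⟩ := frequently_atTop.1 hM N
  obtain ⟨g, hgd, hga, hg⟩ := exists_inverse_branch_iterate hlam hf hr' n rfl
    (fun j _ hj => havoid n j (ball_subset_ball (min_le_left _ _) hj))
  have hsub : {w | chordalDist (f^[n] z) w < r' / K ^ 2} ⊆ ball (f^[n] z) r' := fun w hw => by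
    have := norm_sub_lt_of_chordalDist_lt (by linarith) hδK hw
    rwa [div_mul_cancel₀ _ (by positivity), ← dist_eq_norm, ← mem_ball'] at this
  exact ⟨n, hn, g, (hgd.analyticOnNhd isOpen_ball).mono hsub, hga, fun w hw => hg w (hsub hw)⟩

theorem stmt18_general (lam : ℂ) (hlam : lam ≠ 0) (f : ℂ → ℂ)
    (hf : f = fun w => lam * Complex.exp w)
    (J : Set ℂ) (hJinv : f '' J ⊆ J)
    -- the forward orbit of 0 stays at positive distance from the Julia set J
    (hsep : ∃ ε > (0 : ℝ), ∀ n : ℕ, ∀ w ∈ J, ε ≤ chordalDist (f^[n] 0) w)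
    (z : ℂ) (hz : z ∈ J) :
    IsRadialPoint f z ↔ ¬ Tendsto (fun n => ‖f^[n] z‖) atTop atTop := by
  refine ⟨fun hrad hesc => not_isRadialPoint_of_tendsto hlam hf hesc hrad, fun hnesc => ?_⟩
  obtain ⟨ε, hε, hsep⟩ := hsep
  rw [Filter.tendsto_atTop] at hnesc
  push Not at hnesc
  obtain ⟨M, hM⟩ := hnesc
  refine isRadialPoint_of_frequently_norm_le hlam hf (half_pos hε) (hM.mono fun n => le_of_lt)
    fun n j hj => ?_
  have horbit : f^[n] z ∈ J := (mapsTo_iff_image_subset.2 hJinv).iterate n hz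
  have hclose : chordalDist (f^[j] 0) (f^[n] z) < ε := by
    have := chordalDist_le_two_mul_norm_sub (f^[j] 0) (f^[n] z)
    rw [mem_ball, dist_eq_norm] at hj
    linarith
  exact (hsep j _ horbit).not_gt hclose

/-- Let `f(z) = λ·e^z` (`λ ≠ 0`) be a hyperbolic exponential function (it has an attracting
periodic cycle), whose Julia set `J` stays at positive (spherical) distance from the
forward orbit of `0`.  Then a point `z ∈ J` is radial if and only if the sequence
`(fⁿ(z))ₙ` does not converge to `∞`. -/
theorem stmt18 (lam : ℂ) (hlam : lam ≠ 0) (f : ℂ → ℂ)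
    (hf : f = fun w => lam * Complex.exp w)
    -- hyperbolicity: an attracting periodic cycle
    (hhyp : ∃ (p : ℂ) (k : ℕ), 0 < k ∧ f^[k] p = p ∧ ‖deriv (f^[k]) p‖ < 1)
    (J : Set ℂ) (hJinv : f '' J ⊆ J)
    -- the forward orbit of 0 stays at positive distance from the Julia set J
    (hsep : ∃ ε > (0 : ℝ), ∀ n : ℕ, ∀ w ∈ J, ε ≤ chordalDist (f^[n] 0) w)
    (z : ℂ) (hz : z ∈ J) :
    IsRadialPoint f z ↔ ¬ Tendsto (fun n => ‖f^[n] z‖) atTop atTop :=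
  stmt18_general lam hlam f hf J hJinv hsep z hz
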